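/- Let a ∈ ℂ with a ≠ 0, and let r ∈ ℂ satisfy r² = a³/432. Then the set of (u,v,w) ∈ ℂ³ satisfying the system (S) with (a,b,c) = (a,0,0) together with the additional equation C₉(u,v,w) = r has exactly 27 elements (the degenerate case b = c = 0, a ≠ 0 gives exactly 27 normal forms, the vertices of a Hessian polyhedron). -/

import Mathlib

/-- The system (S): with ψ = u³+v³+w³, χ = u³v³+u³w³+v³w³, λ = 216u³v³w³,
the equations ψ² − 12χ = a, ψ⁴ + λψ = b, ψ⁶ − (5/2)λψ³ − (1/8)λ² = c. -/
def sysS (a b c u v w : ℂ) : Prop :=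
  (u ^ 3 + v ^ 3 + w ^ 3) ^ 2
      - 12 * (u ^ 3 * v ^ 3 + u ^ 3 * w ^ 3 + v ^ 3 * w ^ 3) = a ∧
    (u ^ 3 + v ^ 3 + w ^ 3) ^ 4
      + (216 * (u ^ 3 * v ^ 3 * w ^ 3)) * (u ^ 3 + v ^ 3 + w ^ 3) = b ∧
    (u ^ 3 + v ^ 3 + w ^ 3) ^ 6
      - (5 / 2) * (216 * (u ^ 3 * v ^ 3 * w ^ 3)) * (u ^ 3 + v ^ 3 + w ^ 3) ^ 3
      - (1 / 8) * (216 * (u ^ 3 * v ^ 3 * w ^ 3)) ^ 2 = c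

/-- C₉(u,v,w) = (u³−v³)(u³−w³)(v³−w³). -/
def C9 (u v w : ℂ) : ℂ := (u ^ 3 - v ^ 3) * (u ^ 3 - w ^ 3) * (v ^ 3 - w ^ 3)


/-!
Writing x, y, z for u³, v³, w³, the equations b = c = 0 force ψ = λ = 0, so x, y, z are the
roots of T³ − (a/12)T = T(T − p)(T + p), where p = −6r/a is the number with a = 12p² and
r = −2p³. The sign of C₉ = (x − y)(x − z)(y − z) then singles out the three cyclic orderings
of (p, −p, 0) among its six orderings, and each of these cube triples has 3 · 3 · 1 preimages
(u, v, w), which gives 3 · 9 = 27 solutions.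
-/

open Finset Polynomial

namespace IsPrimitiveRoot

variable {R : Type*} [CommRing R] [IsDomain R] {n : ℕ} {ζ : R}

theorem card_nthRootsFinset_of_pow_eq (hζ : IsPrimitiveRoot ζ n) {α a : R} (hα : α ^ n = a)
    (ha : a ≠ 0) : #(nthRootsFinset n a) = n := by
  classical
  rw [nthRootsFinset_def, Multiset.toFinset_card_of_nodup (hζ.nthRoots_nodup ha),
    hζ.card_nthRoots, if_pos ⟨α, hα⟩]

end IsPrimitiveRoot

theorem Polynomial.nthRootsFinset_zero_right {R : Type*} [CommRing R] [IsDomain R] {n : ℕ}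
    (hn : 0 < n) : nthRootsFinset n (0 : R) = {0} := by
  ext x
  simp [mem_nthRootsFinset hn, hn.ne']

theorem Complex.card_nthRootsFinset {n : ℕ} (hn : n ≠ 0) {a : ℂ} (ha : a ≠ 0) :
    #(nthRootsFinset n a) = n :=
  (Complex.isPrimitiveRoot_exp n hn).card_nthRootsFinset_of_pow_eq
    (IsAlgClosed.exists_pow_nat_eq a (Nat.pos_of_ne_zero hn)).choose_spec ha

section PowTriple

variable {R : Type*} [CommRing R] [IsDomain R] {n : ℕ}

theorem mem_prod_nthRootsFinset_iff (hn : 0 < n) (s t : R × R × R) :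
    t ∈ nthRootsFinset n s.1 ×ˢ nthRootsFinset n s.2.1 ×ˢ nthRootsFinset n s.2.2 ↔ t ^ n = s := by
  obtain ⟨x, y, z⟩ := s
  obtain ⟨u, v, w⟩ := t
  simp [mem_nthRootsFinset hn]

theorem ncard_setOf_pow_mem [DecidableEq R] (hn : 0 < n) (T : Finset (R × R × R)) :
    {t : R × R × R | t ^ n ∈ T}.ncard = ∑ s ∈ T,
      #(nthRootsFinset n s.1) * #(nthRootsFinset n s.2.1) * #(nthRootsFinset n s.2.2) := by
  have hfib : {t : R × R × R | t ^ n ∈ T} = ↑(T.biUnion fun s =>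
      nthRootsFinset n s.1 ×ˢ nthRootsFinset n s.2.1 ×ˢ nthRootsFinset n s.2.2) := by
    ext t
    rw [Set.mem_ofPred_eq, mem_coe, mem_biUnion]
    simp only [mem_prod_nthRootsFinset_iff hn, exists_eq_right']
  rw [hfib, Set.ncard_coe_finset, card_biUnion]
  · simp only [card_product, mul_assoc]
  · intro s _ s' _ hss'
    simp only [Function.onFun, disjoint_left, mem_prod_nthRootsFinset_iff hn]
    exact fun t hs hs' => hss' (hs.symm.trans hs')

end PowTriple

theorem ncard_setOf_cube_mem_rotations {p : ℂ} (hp : p ≠ 0) :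
    {t : ℂ × ℂ × ℂ | t ^ 3 ∈ ({(p, -p, 0), (-p, 0, p), (0, p, -p)} : Finset (ℂ × ℂ × ℂ))}.ncard
      = 27 := by
  rw [ncard_setOf_pow_mem three_pos]
  simp [nthRootsFinset_zero_right three_pos, Complex.card_nthRootsFinset three_ne_zero, hp]

theorem eq_zero_of_quartic_of_sextic {K : Type*} [Field K] [CharZero K] {ψ l : K}
    (hb : ψ ^ 4 + l * ψ = 0) (hc : ψ ^ 6 - 5 / 2 * l * ψ ^ 3 - 1 / 8 * l ^ 2 = 0) :
    ψ = 0 ∧ l = 0 := by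
  have hfac : ψ * (ψ ^ 3 + l) = 0 := by linear_combination hb
  rcases mul_eq_zero.1 hfac with hψ | hl
  · refine ⟨hψ, pow_eq_zero_iff two_ne_zero |>.mp ?_⟩
    linear_combination -8 * hc + (8 * ψ ^ 5 - 20 * l * ψ ^ 2) * hψ
  · have hl0 : l = 0 := pow_eq_zero_iff two_ne_zero |>.mp <| by
      linear_combination 8 / 27 * hc - 8 / 27 * (ψ ^ 3 - 7 / 2 * l) * hl
    exact ⟨pow_eq_zero_iff three_ne_zero |>.mp (by linear_combination hl - hl0), hl0⟩

theorem sysS_zero_zero_iff (a u v w : ℂ) :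
    sysS a 0 0 u v w ↔ u ^ 3 + v ^ 3 + w ^ 3 = 0 ∧ u ^ 3 * v ^ 3 * w ^ 3 = 0 ∧
      u ^ 3 * v ^ 3 + u ^ 3 * w ^ 3 + v ^ 3 * w ^ 3 = -(a / 12) := by
  constructor
  · rintro ⟨ha, hb, hc⟩
    obtain ⟨hψ, hl⟩ := eq_zero_of_quartic_of_sextic hb hc
    refine ⟨hψ, by linear_combination hl / 216, ?_⟩
    linear_combination -ha / 12 + (u ^ 3 + v ^ 3 + w ^ 3) / 12 * hψ
  · rintro ⟨hψ, he3, he2⟩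
    refine ⟨?_, ?_, ?_⟩
    · linear_combination (u ^ 3 + v ^ 3 + w ^ 3) * hψ - 12 * he2
    · linear_combination (u ^ 3 + v ^ 3 + w ^ 3) ^ 3 * hψ + 216 * (u ^ 3 + v ^ 3 + w ^ 3) * he3
    · linear_combination ((u ^ 3 + v ^ 3 + w ^ 3) ^ 5
        - 540 * (u ^ 3 * v ^ 3 * w ^ 3) * (u ^ 3 + v ^ 3 + w ^ 3) ^ 2) * hψ
        - 5832 * (u ^ 3 * v ^ 3 * w ^ 3) * he3

section Vieta

variable {R : Type*} [CommRing R] [IsDomain R] [NeZero (2 : R)] {x y z p : R}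

theorem eq_and_eq_neg_of_third_eq_zero (hz : z = 0) (hs : x + y + z = 0)
    (he : x * y + x * z + y * z = -p ^ 2) (hd : (x - y) * (x - z) * (y - z) = -2 * p ^ 3) :
    x = p ∧ y = -p := by
  subst hz
  have hy : y = -x := by linear_combination hs
  subst hy
  have hsq : x ^ 2 = p ^ 2 := by linear_combination -he
  have hcube : x ^ 3 = p ^ 3 := by
    refine mul_left_cancel₀ (neg_ne_zero.2 (NeZero.ne (2 : R))) ?_
    linear_combination hd
  have hx : x = p := by
    have : p ^ 2 * (x - p) = 0 := by linear_combination hcube - x * hsq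
    rcases mul_eq_zero.1 this with hp | hxp
    · have hp0 : p = 0 := pow_eq_zero_iff two_ne_zero |>.mp hp
      subst hp0
      exact pow_eq_zero_iff two_ne_zero |>.mp (by simpa using hsq)
    · exact sub_eq_zero.1 hxp
  exact ⟨hx, by rw [hx]⟩

theorem vieta_vandermonde_iff :
    (x + y + z = 0 ∧ x * y * z = 0 ∧ x * y + x * z + y * z = -p ^ 2 ∧
      (x - y) * (x - z) * (y - z) = -2 * p ^ 3) ↔
      (x, y, z) = (p, -p, 0) ∨ (x, y, z) = (-p, 0, p) ∨ (x, y, z) = (0, p, -p) := by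
  constructor
  · rintro ⟨hs, he3, he2, hd⟩
    rcases mul_eq_zero.1 he3 with hxy | hz
    · -- all four conditions are invariant under cyclic rotation of (x, y, z)
      rcases mul_eq_zero.1 hxy with hx | hy
      · obtain ⟨hy, hz⟩ := eq_and_eq_neg_of_third_eq_zero (x := y) (y := z) (p := p) hx
          (by linear_combination hs) (by linear_combination he2) (by linear_combination hd)
        simp [hx, hy, hz]
      · obtain ⟨hz, hx⟩ := eq_and_eq_neg_of_third_eq_zero (x := z) (y := x) (p := p) hy
          (by linear_combination hs) (by linear_combination he2) (by linear_combination hd)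
        simp [hx, hy, hz]
    · obtain ⟨hx, hy⟩ := eq_and_eq_neg_of_third_eq_zero hz hs he2 hd
      simp [hx, hy, hz]
  · rintro (h | h | h) <;> simp only [Prod.mk.injEq] at h <;> obtain ⟨rfl, rfl, rfl⟩ := h <;>
      refine ⟨by ring, by ring, by ring, by ring⟩

end Vieta

/-- for a ≠ 0 and r with r² = a³/432, the system (S) with
(a,b,c) = (a,0,0) and C₉ = r has exactly 27 solutions. -/
theorem degenerate_case_has_27_solutions (a r : ℂ) (ha : a ≠ 0)
    (hr : r ^ 2 = a ^ 3 / 432) :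
    {t : ℂ × ℂ × ℂ | sysS a 0 0 t.1 t.2.1 t.2.2 ∧ C9 t.1 t.2.1 t.2.2 = r}.ncard
      = 27 := by
  have hr0 : r ≠ 0 := by
    rintro rfl
    exact ha (pow_eq_zero_iff three_ne_zero |>.mp (by linear_combination -432 * hr))
  set p := -6 * r / a with hp
  have hp0 : p ≠ 0 := by simp [hp, ha, hr0]
  have hp2 : p ^ 2 = a / 12 := by
    rw [hp]
    field_simp
    linear_combination 432 * hr
  have hp3 : -2 * p ^ 3 = r := by
    rw [pow_succ, hp2, hp]
    field_simp
    ring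
  convert ncard_setOf_cube_mem_rotations hp0 using 2
  ext ⟨u, v, w⟩
  rw [Set.mem_ofPred_eq, Set.mem_ofPred_eq, sysS_zero_zero_iff, C9, ← hp2, ← hp3, Prod.pow_mk,
    Prod.pow_mk, mem_insert, mem_insert, mem_singleton, ← vieta_vandermonde_iff]
  simp only [and_assoc]
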